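/- arXiv:1009.2895 — 5 statements merged into one kernel-verified Lean document; each statement's English description precedes it below -/
import Mathlib

section
/- Let V be a finite-dimensional complex vector space and H, N : V → V linear endomorphisms with H ∘ N − N ∘ H = 2·N. Assume H is diagonalizable with distinct real eigenvalues a_1 > a_2 > ⋯ > a_k, each eigenspace M_{a_i} = ker(H − a_i·id) being nonzero, and assume ker N ⊆ M_{a_1}. Then the eigenvalues form a string with gap 2: a_i = a_1 − 2(i−1) for every i = 1, …, k. In particular, if a_1 = −2 then a_i = −2i for each i. -/
/-- Under homogeneity, the eigenvalues of `H` form a string with gap `2`: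
`aᵢ = a₁ − 2(i−1)`; in particular if `a₁ = −2` then `aᵢ = −2i`. -/
theorem stmt3 (V : Type*) [AddCommGroup V] [Module ℂ V] [FiniteDimensional ℂ V]
    (H N : V →ₗ[ℂ] V) (hcomm : H ∘ₗ N - N ∘ₗ H = 2 • N)
    (k : ℕ) (hk : 0 < k) (a : Fin k → ℝ) (ha : StrictAnti a)
    (M : Fin k → Submodule ℂ V)
    (hM : ∀ i, M i = LinearMap.ker (H - (a i : ℂ) • (LinearMap.id : V →ₗ[ℂ] V)))
    (hne : ∀ i, M i ≠ ⊥)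
    (hint : DirectSum.IsInternal M)
    (hhom : LinearMap.ker N ≤ M ⟨0, hk⟩) :
    (∀ i : Fin k, a i = a ⟨0, hk⟩ - 2 * (i : ℕ)) ∧
      (a ⟨0, hk⟩ = -2 → ∀ i : Fin k, a i = -(2 * ((i : ℕ) + 1))) := by
  have hM' : ∀ i, M i = Module.End.eigenspace H ((a i : ℝ) : ℂ) := by
    intro i; rw [hM i, Module.End.eigenspace_def]; rfl
  -- membership in M i
  have hmem : ∀ i (v : V), v ∈ M i ↔ H v = ((a i : ℂ)) • v := by
    intro i v; rw [hM' i]; exact Module.End.mem_eigenspace_iff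
  -- diag lemma
  have diag : ∀ c : ℂ, (∀ i, (a i : ℂ) ≠ c) → Module.End.eigenspace H c = ⊥ := by
    intro c hc
    have hdis := (Module.End.eigenspaces_iSupIndep (f := (H : Module.End ℂ V))) c
    have hle : (⊤ : Submodule ℂ V) ≤ ⨆ (ν : ℂ) (_ : ν ≠ c), Module.End.eigenspace H ν := by
      rw [← hint.submodule_iSup_eq_top]
      apply iSup_le
      intro i
      rw [hM' i]
      exact le_iSup₂ (f := fun (ν : ℂ) (_ : ν ≠ c) => Module.End.eigenspace H ν)
        ((a i : ℝ) : ℂ) (hc i)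
    exact hdis.eq_bot_of_le (le_trans le_top hle)
  -- N maps M i to eigenspace (a i + 2)
  have step : ∀ i (v : V), v ∈ M i → N v ∈ Module.End.eigenspace H ((a i : ℂ) + 2) := by
    intro i v hv
    rw [Module.End.mem_eigenspace_iff]
    have h1 : H (N v) - N (H v) = 2 • N v := by
      have := congrArg (fun f => f v) hcomm
      simpa using this
    have h2 : H v = (a i : ℂ) • v := (hmem i v).1 hv
    rw [h2, map_smul] at h1
    have : H (N v) = (a i : ℂ) • N v + 2 • N v := by linear_combination (norm := module) h1
    rw [this]; module
  -- existence of successor eigenvalue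
  have exsucc : ∀ i : Fin k, i ≠ ⟨0, hk⟩ → ∃ j : Fin k, a j = a i + 2 := by
    intro i hi
    by_contra hno
    push_neg at hno
    have hc : ∀ j, (a j : ℂ) ≠ (a i : ℂ) + 2 := by
      intro j hj
      apply hno j
      have : ((a j : ℝ) : ℂ) = (((a i + 2 : ℝ)) : ℂ) := by push_cast; exact hj
      exact_mod_cast this
    have hbot := diag ((a i : ℂ) + 2) hc
    have hker : M i ≤ LinearMap.ker N := by
      intro v hv
      have := step i v hv
      rw [hbot, Submodule.mem_bot] at this
      exact this
    have hle0 : M i ≤ M ⟨0, hk⟩ := le_trans hker hhom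
    have h0lt : (⟨0, hk⟩ : Fin k) < i := by
      have : i.1 ≠ 0 := fun h' => hi (Fin.ext h')
      rw [Fin.lt_def]
      simp only [Fin.val_mk]
      omega
    have hane : a ⟨0, hk⟩ ≠ a i := (ha h0lt).ne'
    apply hne i
    rw [eq_bot_iff]
    intro v hv
    have h1 : H v = (a i : ℂ) • v := (hmem i v).1 hv
    have h2 : H v = (a ⟨0, hk⟩ : ℂ) • v := (hmem _ v).1 (hle0 hv)
    have h3 : ((a i : ℂ) - (a ⟨0, hk⟩ : ℂ)) • v = 0 := by
      rw [sub_smul, ← h1, ← h2, sub_self]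
    rw [Submodule.mem_bot]
    rcases smul_eq_zero.mp h3 with h | h
    · exfalso
      apply hane
      have : (a i : ℂ) = (a ⟨0, hk⟩ : ℂ) := sub_eq_zero.mp h
      exact_mod_cast this.symm
    · exact h
  -- main claim by strong induction
  have main : ∀ n : ℕ, ∀ h : n < k, a ⟨n, h⟩ = a ⟨0, hk⟩ - 2 * n := by
    intro n
    induction n using Nat.strong_induction_on with
    | _ n ih =>
      intro h
      rcases Nat.eq_zero_or_pos n with rfl | hn
      · simp
      · have hi : (⟨n, h⟩ : Fin k) ≠ ⟨0, hk⟩ := by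
          simp [Fin.ext_iff]; omega
        obtain ⟨j, hj⟩ := exsucc ⟨n, h⟩ hi
        have hjn : (j : ℕ) < n := by
          by_contra hjn
          push_neg at hjn
          have hle : (⟨n, h⟩ : Fin k) ≤ j := by rw [Fin.le_def]; exact hjn
          have : a j ≤ a ⟨n, h⟩ := ha.antitone hle
          linarith
        have hIH := ih j hjn j.2
        have hj2 : a j = a ⟨0, hk⟩ - 2 * (j : ℕ) := by
          have : (⟨(j : ℕ), j.2⟩ : Fin k) = j := Fin.ext rfl
          rw [← this]; exact hIH
        have hsucc : (j : ℕ) + 1 = n := by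
          by_contra hne1
          have hlt : (j : ℕ) + 1 < n := by omega
          have h1 := ih ((j : ℕ) + 1) hlt (by omega)
          have h2 : a ⟨(j : ℕ) + 1, by omega⟩ > a ⟨n, h⟩ := ha (Fin.mk_lt_mk.mpr hlt)
          push_cast at h1 h2
          linarith
        subst hsucc
        push_cast at hj2 ⊢
        linarith
  constructor
  · intro i
    have := main i.1 i.2
    simpa using this
  · intro h0 i
    have := main i.1 i.2
    rw [h0] at this
    simp only [Fin.eta] at this ⊢
    linarith
end

section
/- Let V be a finite-dimensional complex vector space and H, N : V → V linear endomorphisms with H ∘ N − N ∘ H = 2·N. Assume H is diagonalizable with distinct real eigenvalues a_1 > a_2 > ⋯ > a_k, each eigenspace M_{a_i} = ker(H − a_i·id) being nonzero, and assume ker N ⊆ M_{a_1}. Then the eigenspace dimensions are weakly decreasing: for all indices i > j ≥ 1, dim M_{a_i} ≤ dim M_{a_j}. -/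
/-- Under homogeneity, the eigenspace dimensions are weakly decreasing. -/
theorem stmt4 (V : Type*) [AddCommGroup V] [Module ℂ V] [FiniteDimensional ℂ V]
    (H N : V →ₗ[ℂ] V) (hcomm : H ∘ₗ N - N ∘ₗ H = 2 • N)
    (k : ℕ) (hk : 0 < k) (a : Fin k → ℝ) (ha : StrictAnti a)
    (M : Fin k → Submodule ℂ V)
    (hM : ∀ i, M i = LinearMap.ker (H - (a i : ℂ) • (LinearMap.id : V →ₗ[ℂ] V)))
    (hne : ∀ i, M i ≠ ⊥)
    (hint : DirectSum.IsInternal M)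
    (hhom : LinearMap.ker N ≤ M ⟨0, hk⟩) :
    ∀ i j : Fin k, j < i → Module.finrank ℂ (M i) ≤ Module.finrank ℂ (M j) := by
  -- commutation relation pointwise
  have hHN : ∀ v, H (N v) = N (H v) + 2 • N v := by
    intro v
    have h := LinearMap.ext_iff.mp hcomm v
    simp only [LinearMap.sub_apply, LinearMap.comp_apply, LinearMap.smul_apply] at h
    linear_combination (norm := module) h
  -- M i is the eigenspace for a i
  have hMeig : ∀ i, M i = Module.End.eigenspace H (a i : ℂ) := by
    intro i
    rw [hM i]
    ext v
    simp [Module.End.mem_eigenspace_iff, LinearMap.mem_ker, sub_eq_zero]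
  have htop : (⨆ i, M i) = ⊤ := hint.submodule_iSup_eq_top
  have hindep := Module.End.eigenspaces_iSupIndep H
  -- non-eigenvalues have trivial eigenspace
  have hker0 : ∀ c : ℂ, (∀ i, (a i : ℂ) ≠ c) → Module.End.eigenspace H c = ⊥ := by
    intro c hc
    have hdisj : Disjoint (Module.End.eigenspace H c)
        (⨆ (μ : ℂ) (_ : μ ≠ c), Module.End.eigenspace H μ) := hindep c
    have hle : (⊤ : Submodule ℂ V) ≤ ⨆ (μ : ℂ) (_ : μ ≠ c), Module.End.eigenspace H μ := by
      rw [← htop]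
      refine iSup_le fun i => ?_
      rw [hMeig i]
      exact le_iSup₂ (f := fun μ _ => Module.End.eigenspace H μ) ((a i : ℂ)) (hc i)
    have := hdisj.mono_right hle
    simpa [disjoint_top] using this
  -- N maps M i into the eigenspace of a i + 2
  have hNmap : ∀ (i : Fin k) (v : V), v ∈ M i →
      N v ∈ Module.End.eigenspace H ((a i : ℂ) + 2) := by
    intro i v hv
    rw [hMeig i, Module.End.mem_eigenspace_iff] at hv
    rw [Module.End.mem_eigenspace_iff, hHN, hv]
    simp only [map_smul]
    module
  -- for i ≠ 0, a i + 2 is also an eigenvalue, with smaller index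
  have hstep : ∀ i : Fin k, (⟨0, hk⟩ : Fin k) < i → ∃ m : Fin k, m < i ∧ a m = a i + 2 := by
    intro i hi
    by_contra hcon
    push_neg at hcon
    have hall : ∀ m : Fin k, (a m : ℂ) ≠ (a i : ℂ) + 2 := by
      intro m hm
      have hmr : a m = a i + 2 := by exact_mod_cast hm
      rcases lt_trichotomy m i with h | h | h
      · exact hcon m h hmr
      · subst h; linarith
      · have := ha h; linarith
    have h0 : Module.End.eigenspace H ((a i : ℂ) + 2) = ⊥ := hker0 _ hall
    -- then M i ≤ ker N ≤ M 0
    have hle : M i ≤ LinearMap.ker N := by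
      intro v hv
      have := hNmap i v hv
      rw [h0] at this
      simpa [LinearMap.mem_ker] using this
    have hdisj := hint.submodule_iSupIndep.pairwiseDisjoint
      (show i ≠ ⟨0, hk⟩ from ne_of_gt hi)
    have : M i = ⊥ := by
      rw [eq_bot_iff]
      intro v hv
      have h1 : v ∈ M ⟨0, hk⟩ := hhom (hle hv)
      exact hdisj.le_bot (Submodule.mem_inf.mpr ⟨hv, h1⟩)
    exact hne i this
  -- helper to build Fin elements
  -- consecutive eigenvalues differ by 2
  have hconsec : ∀ n : ℕ, ∀ h : n + 1 < k,
      a ⟨n + 1, h⟩ + 2 = a ⟨n, Nat.lt_of_succ_lt h⟩ := by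
    intro n
    induction n with
    | zero =>
      intro h
      obtain ⟨m, hm, hma⟩ := hstep ⟨1, h⟩ (by exact Fin.mk_lt_mk.mpr Nat.zero_lt_one)
      have hm0 : m = ⟨0, hk⟩ := by
        have h0 : (m : ℕ) < 1 := hm
        exact Fin.ext (show (m : ℕ) = 0 by omega)
      rw [hm0] at hma
      linarith [hma]
    | succ n ih =>
      intro h
      have hn1 : n + 1 < k := Nat.lt_of_succ_lt h
      obtain ⟨m, hm, hma⟩ := hstep ⟨n + 2, h⟩
        (Fin.mk_lt_mk.mpr (Nat.zero_lt_succ _))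
      have hih := ih hn1
      -- a m = a (n+2) + 2 < a (n+1) + 2 = a n
      have hlt1 : a m < a ⟨n, Nat.lt_of_succ_lt hn1⟩ := by
        have : a ⟨n + 2, h⟩ < a ⟨n + 1, hn1⟩ := ha (Fin.mk_lt_mk.mpr (Nat.lt_succ_self _))
        linarith
      have hmgt : (⟨n, Nat.lt_of_succ_lt hn1⟩ : Fin k) < m := by
        by_contra hle
        push_neg at hle
        rcases eq_or_lt_of_le hle with h' | h'
        · rw [h'] at hlt1; exact lt_irrefl _ hlt1
        · exact absurd hlt1 (not_lt.mpr (le_of_lt (ha h')))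
      have hmeq : m = ⟨n + 1, hn1⟩ := by
        have h1 : (n : ℕ) < (m : ℕ) := hmgt
        have h2 : (m : ℕ) < n + 2 := hm
        exact Fin.ext (show (m : ℕ) = n + 1 by omega)
      rw [hmeq] at hma
      linarith
  -- N is injective on M i for i ≠ 0 and maps M_{n+1} into M_n, so dims decrease
  have hdim : ∀ n : ℕ, ∀ h : n + 1 < k,
      Module.finrank ℂ (M ⟨n + 1, h⟩) ≤ Module.finrank ℂ (M ⟨n, Nat.lt_of_succ_lt h⟩) := by
    intro n h
    have hmapsto : ∀ v ∈ M ⟨n + 1, h⟩, N v ∈ M ⟨n, Nat.lt_of_succ_lt h⟩ := by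
      intro v hv
      have := hNmap _ v hv
      rw [hMeig]
      have hcast : ((a ⟨n + 1, h⟩ : ℝ) : ℂ) + 2 = ((a ⟨n, Nat.lt_of_succ_lt h⟩ : ℝ) : ℂ) := by
        rw [← hconsec n h]; push_cast; ring
      rwa [hcast] at this
    let φ : M ⟨n + 1, h⟩ →ₗ[ℂ] M ⟨n, Nat.lt_of_succ_lt h⟩ :=
      N.restrict hmapsto
    have hinj : Function.Injective φ := by
      rw [← LinearMap.ker_eq_bot, eq_bot_iff]
      rintro ⟨v, hv⟩ hker
      have hNv : N v = 0 := by
        have := congrArg Subtype.val (show φ ⟨v, hv⟩ = 0 from hker)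
        simpa [φ, LinearMap.restrict_apply] using this
      have h1 : v ∈ M ⟨0, hk⟩ := hhom (LinearMap.mem_ker.mpr hNv)
      have hne0 : (⟨0, hk⟩ : Fin k) ≠ ⟨n + 1, h⟩ := by
        intro hc
        exact absurd (congrArg Fin.val hc) (by simp)
      have hdisj := hint.submodule_iSupIndep.pairwiseDisjoint hne0
      have : v = 0 := by
        have := hdisj.le_bot (Submodule.mem_inf.mpr ⟨h1, hv⟩)
        simpa using this
      simp [this]
    exact LinearMap.finrank_le_finrank_of_injective hinj
  -- chain the consecutive inequalities
  have hchain : ∀ n : ℕ, ∀ hn : n < k, ∀ m : ℕ, ∀ hm : m < k, m < n →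
      Module.finrank ℂ (M ⟨n, hn⟩) ≤ Module.finrank ℂ (M ⟨m, hm⟩) := by
    intro n
    induction n with
    | zero => intro _ m _ hmn; omega
    | succ n ih =>
      intro hn m hm hmn
      have h1 := hdim n hn
      rcases Nat.lt_or_ge m n with h | h
      · exact le_trans h1 (ih (Nat.lt_of_succ_lt hn) m hm h)
      · have : m = n := by omega
        subst this
        exact h1
  intro i j hij
  have := hchain i.val i.isLt j.val j.isLt hij
  simpa using this
end

section
/- Let V be a finite-dimensional complex vector space and H, N : V → V linear endomorphisms with H ∘ N − N ∘ H = 2·N. Assume H is diagonalizable with distinct real eigenvalues a_1 > a_2 > ⋯ > a_k, each eigenspace M_{a_i} = ker(H − a_i·id) being nonzero, assume ker N ⊆ M_{a_1}, and assume the top eigenvalue is a_1 = −2. Then: (a) ker N = M_{−2}; (b) the set of eigenvalues of H is exactly {−2, −4, …, −2k}; and (c) dim M_{−2} ≥ dim M_{−4} ≥ ⋯ ≥ dim M_{−2k}. -/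
/-- Under homogeneity with top eigenvalue `−2`: (a) `ker N = M₋₂`;
(b) the eigenvalues are exactly `−2, −4, …, −2k`;
(c) the eigenspace dimensions are weakly decreasing. -/
theorem stmt5 (V : Type*) [AddCommGroup V] [Module ℂ V] [FiniteDimensional ℂ V]
    (H N : V →ₗ[ℂ] V) (hcomm : H ∘ₗ N - N ∘ₗ H = 2 • N)
    (k : ℕ) (hk : 0 < k) (a : Fin k → ℝ) (ha : StrictAnti a)
    (M : Fin k → Submodule ℂ V)
    (hM : ∀ i, M i = LinearMap.ker (H - (a i : ℂ) • (LinearMap.id : V →ₗ[ℂ] V)))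
    (hne : ∀ i, M i ≠ ⊥)
    (hint : DirectSum.IsInternal M)
    (hhom : LinearMap.ker N ≤ M ⟨0, hk⟩)
    (htop : a ⟨0, hk⟩ = -2) :
    LinearMap.ker N = M ⟨0, hk⟩ ∧
      (∀ i : Fin k, a i = -(2 * ((i : ℕ) + 1))) ∧
      (∀ i j : Fin k, j ≤ i → Module.finrank ℂ (M i) ≤ Module.finrank ℂ (M j)) := by
  classical
  set i0 : Fin k := ⟨0, hk⟩ with hi0
  -- membership in M i
  have hmemM : ∀ (i : Fin k) (v : V), v ∈ M i ↔ H v = (a i : ℂ) • v := by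
    intro i v
    rw [hM i, LinearMap.mem_ker, LinearMap.sub_apply, LinearMap.smul_apply,
      LinearMap.id_apply, sub_eq_zero]
  -- the commutator relation pointwise
  have hNmap : ∀ (c : ℂ) (v : V), H v = c • v → H (N v) = (c + 2) • N v := by
    intro c v hv
    have h1 := LinearMap.congr_fun hcomm v
    simp only [LinearMap.sub_apply, LinearMap.comp_apply, LinearMap.smul_apply] at h1
    have h2 : H (N v) = N (H v) + (2 : ℕ) • N v := by
      rw [← h1]; abel
    rw [hv, map_smul] at h2
    rw [h2, add_smul]
    congr 1
    simp [two_smul]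
  -- two distinct eigenvalues: intersection trivial
  have hdisj : ∀ (b c : ℂ), b ≠ c → ∀ v : V, H v = b • v → H v = c • v → v = 0 := by
    intro b c hbc v hb hc
    have : (b - c) • v = 0 := by rw [sub_smul, hb.symm.trans hc, sub_self]
    rcases smul_eq_zero.mp this with h | h
    · exact absurd (sub_eq_zero.mp h) hbc
    · exact h
  -- a complex number not among the (a j) is not an eigenvalue
  have hnoteig : ∀ c : ℂ, (∀ j, (a j : ℂ) ≠ c) → ∀ v : V, H v = c • v → v = 0 := by
    intro c hc v hv
    have hvc : v ∈ Module.End.eigenspace H c := Module.End.mem_eigenspace_iff.mpr hv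
    have hsup : v ∈ ⨆ μ, ⨆ _ : μ ≠ c, Module.End.eigenspace H μ := by
      have hvtop : v ∈ (⊤ : Submodule ℂ V) := trivial
      rw [← hint.submodule_iSup_eq_top] at hvtop
      refine (iSup_le fun i => ?_ : (⨆ i, M i) ≤ _) hvtop
      have hMi : M i ≤ Module.End.eigenspace H (a i : ℂ) := by
        intro w hw
        exact Module.End.mem_eigenspace_iff.mpr ((hmemM i w).mp hw)
      exact le_trans hMi (le_iSup₂_of_le (a i : ℂ) (hc i) le_rfl)
    have hind := (Module.End.eigenspaces_iSupIndep H) c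
    have : v ∈ (⊥ : Submodule ℂ V) := hind.le_bot ⟨hvc, hsup⟩
    simpa using this
  -- all eigenvalues are ≤ -2
  have hle : ∀ i : Fin k, a i ≤ -2 := by
    intro i
    rw [← htop]
    exact ha.antitone (by simp [hi0, Fin.le_def])
  -- (a): M i0 ≤ ker N
  have hMker : M i0 ≤ LinearMap.ker N := by
    intro v hv
    have hv' := (hmemM i0 v).mp hv
    have hNv := hNmap _ v hv'
    rw [htop] at hNv
    have h0 : ((-2 : ℝ) : ℂ) + 2 = (0 : ℂ) := by norm_num
    rw [h0] at hNv
    have : N v = 0 := by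
      apply hnoteig 0 _ (N v) (by simpa using hNv)
      intro j
      have := hle j
      intro hcon
      have : a j = 0 := by exact_mod_cast hcon
      linarith [hle j]
    exact LinearMap.mem_ker.mpr this
  have parta : LinearMap.ker N = M i0 := le_antisymm hhom hMker
  -- Step B: every non-top eigenvalue shifted by 2 is again an eigenvalue
  have hstep : ∀ i : Fin k, i ≠ i0 → ∃ j : Fin k, j < i ∧ a j = a i + 2 := by
    intro i hi
    by_contra hcon
    push_neg at hcon
    -- then N kills M i, so M i ≤ M i0, so M i = ⊥
    have hnot : ∀ j, (a j : ℂ) ≠ ((a i : ℂ) + 2) := by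
      intro j hj
      have hj' : a j = a i + 2 := by exact_mod_cast hj
      have hji : j < i := by
        have : a i < a j := by linarith
        exact lt_of_not_ge (fun hc => absurd (ha.antitone hc) (not_le.mpr this))
      exact absurd hj' (by intro h; exact (by exact absurd h (by
        intro h'; exact (fun hh => hh) (hcon j hji h'))))
    have hMi : M i ≤ LinearMap.ker N := by
      intro v hv
      have hv' := (hmemM i v).mp hv
      exact LinearMap.mem_ker.mpr (hnoteig _ hnot (N v) (hNmap _ v hv'))
    have hMi0 : M i ≤ M i0 := le_trans hMi hhom
    have : M i = ⊥ := by
      rw [eq_bot_iff]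
      intro v hv
      have h1 := (hmemM i v).mp hv
      have h2 := (hmemM i0 v).mp (hMi0 hv)
      have hne' : (a i : ℂ) ≠ (a i0 : ℂ) := by
        have : a i ≠ a i0 := ha.injective.ne hi
        exact_mod_cast this
      simpa using hdisj _ _ hne' v h1 h2
    exact hne i this
  -- (b): eigenvalues are -2, -4, ..., -2k
  have hb : ∀ n, ∀ hn : n < k, a ⟨n, hn⟩ = -(2 * (n + 1)) := by
    intro n
    induction n using Nat.strong_induction_on with
    | _ n IH =>
      intro hn
      rcases Nat.eq_zero_or_pos n with rfl | hpos
      · simpa using htop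
      · have hine : (⟨n, hn⟩ : Fin k) ≠ i0 := by
          simp [hi0, Fin.ext_iff, Nat.pos_iff_ne_zero.mp hpos]
        obtain ⟨j, hjlt, hja⟩ := hstep ⟨n, hn⟩ hine
        have hjn : (j : ℕ) < n := hjlt
        have hjval : a j = -(2 * ((j : ℕ) + 1)) := by
          have := IH (j : ℕ) hjn j.isLt
          simpa [Fin.eta] using this
        have hn1 : n - 1 < k := by omega
        have hprev : a ⟨n - 1, hn1⟩ = -(2 * ((n - 1 : ℕ) + 1)) := IH (n - 1) (by omega) hn1
        have hlt : a ⟨n, hn⟩ < a ⟨n - 1, hn1⟩ := ha (by simp [Fin.lt_def]; omega)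
        -- a ⟨n,hn⟩ = a j - 2
        have hval : a ⟨n, hn⟩ = -(2 * ((j : ℕ) + 1)) - 2 := by
          have h' : a ⟨n, hn⟩ = a j - 2 := by linarith
          rw [h', hjval]
        have hcast : ((n - 1 : ℕ) : ℝ) + 1 = (n : ℝ) := by
          have : (1 : ℕ) ≤ n := hpos
          push_cast [Nat.cast_sub this]
          ring
        have hineq : a ⟨n, hn⟩ < -(2 * (n : ℝ)) := by
          calc a ⟨n, hn⟩ < a ⟨n - 1, hn1⟩ := hlt
            _ = -(2 * (n : ℝ)) := by rw [hprev, hcast]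
        -- deduce j = n - 1
        have hjge : n ≤ (j : ℕ) + 1 := by
          by_contra hc
          push_neg at hc
          have h2 : ((j : ℕ) : ℝ) + 2 ≤ (n : ℝ) := by exact_mod_cast hc
          rw [hval] at hineq
          linarith
        have hjeq : (j : ℕ) = n - 1 := by omega
        rw [hval, hjeq, hcast]
        ring
  have partb : ∀ i : Fin k, a i = -(2 * ((i : ℕ) + 1)) := by
    intro i
    have := hb (i : ℕ) i.isLt
    simpa [Fin.eta] using this
  -- (c): adjacent inequality
  have hadj : ∀ n, ∀ h : n + 1 < k, Module.finrank ℂ (M ⟨n + 1, h⟩) ≤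
      Module.finrank ℂ (M ⟨n, Nat.lt_of_succ_lt h⟩) := by
    intro n h
    set i : Fin k := ⟨n + 1, h⟩
    set j : Fin k := ⟨n, Nat.lt_of_succ_lt h⟩
    have hij : a j = a i + 2 := by
      rw [partb i, partb j]
      show -(2 * (((n : ℕ) : ℝ) + 1)) = -(2 * (((n + 1 : ℕ) : ℝ) + 1)) + 2
      push_cast
      ring
    -- N maps M i into M j
    have hmaps : ∀ v ∈ M i, N v ∈ M j := by
      intro v hv
      rw [hmemM]
      have := hNmap _ v ((hmemM i v).mp hv)
      rw [this, hij]
      push_cast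
      ring_nf
    -- the restriction is injective
    have hinj : Function.Injective (N.restrict hmaps) := by
      rw [← LinearMap.ker_eq_bot, eq_bot_iff]
      rintro ⟨v, hv⟩ hv0
      have hNv0 : N v = 0 := by
        have := congrArg Subtype.val (LinearMap.mem_ker.mp hv0)
        simpa [LinearMap.restrict_apply] using this
      have hv0' : v ∈ M i0 := parta ▸ LinearMap.mem_ker.mpr hNv0
      have hne' : (a i : ℂ) ≠ (a i0 : ℂ) := by
        have : a i ≠ a i0 := ha.injective.ne (by simp [i, hi0, Fin.ext_iff])
        exact_mod_cast this
      have hv00 : v = 0 := hdisj _ _ hne' v ((hmemM i v).mp hv) ((hmemM i0 v).mp hv0')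
      simp [Submodule.mem_bot, Subtype.ext_iff, hv00]
    exact LinearMap.finrank_le_finrank_of_injective hinj
  -- general inequality by induction on the gap
  have hgap : ∀ d n, ∀ h : n + d < k, Module.finrank ℂ (M ⟨n + d, h⟩) ≤
      Module.finrank ℂ (M ⟨n, by omega⟩) := by
    intro d
    induction d with
    | zero => intro n h; exact le_rfl
    | succ d IH =>
      intro n h
      have h1 : n + d + 1 < k := by omega
      have := hadj (n + d) h1
      have h2 := IH n (by omega)
      calc Module.finrank ℂ (M ⟨n + (d + 1), h⟩)
          = Module.finrank ℂ (M ⟨n + d + 1, h1⟩) := by congr 1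
        _ ≤ Module.finrank ℂ (M ⟨n + d, by omega⟩) := hadj (n + d) h1
        _ ≤ Module.finrank ℂ (M ⟨n, by omega⟩) := IH n (by omega)
  refine ⟨parta, partb, ?_⟩
  intro i j hji
  have hd : (i : ℕ) = (j : ℕ) + ((i : ℕ) - (j : ℕ)) := by omega
  have h1 : (j : ℕ) + ((i : ℕ) - (j : ℕ)) < k := by omega
  have := hgap ((i : ℕ) - (j : ℕ)) (j : ℕ) h1
  have hi' : i = ⟨(j : ℕ) + ((i : ℕ) - (j : ℕ)), h1⟩ := by
    rw [Fin.ext_iff]; simpa using hd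
  rw [hi']
  exact this
end

section
/- For every integer n ≥ 1, the following identity holds in the polynomial ring ℤ[q]: ∏_{1 ≤ i < j ≤ n} (1 − q^{(j−i)+1}) = (∏_{1 ≤ i < j ≤ n} (1 − q^{j−i})) · ∏_{i=1}^{n−1} (1 + q + q^2 + ⋯ + q^{i}). Equivalently, the rational function ∏_{1 ≤ i < j ≤ n} (1 − q^{(j−i)+1})/(1 − q^{j−i}) equals the polynomial ∏_{i=1}^{n−1} (1 + q + ⋯ + q^{i}). (This is the Kostant–Macdonald–Shapiro–Steinberg product identity for the root system of type A_{n−1}, whose positive roots correspond to the pairs (i, j) with 1 ≤ i < j ≤ n, the root corresponding to (i, j) having height j − i.) -/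
open Polynomial Finset

lemma geom_aux (n : ℕ) :
    (1 - (X : ℤ[X]) ^ (n + 1)) = (1 - X) * ∑ j ∈ Finset.range (n + 1), (X : ℤ[X]) ^ j := by
  have h := geom_sum_mul (X : ℤ[X]) (n + 1)
  linear_combination h

lemma shift_aux (n : ℕ) :
    ∏ k ∈ Finset.range n, (1 - (X : ℤ[X]) ^ (k + 2)) =
      (∏ k ∈ Finset.range n, (1 - (X : ℤ[X]) ^ (k + 1))) *
        ∑ j ∈ Finset.range (n + 1), (X : ℤ[X]) ^ j := by
  have hX : (1 - (X : ℤ[X])) ≠ 0 := by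
    intro h
    have := congrArg (fun p => p.coeff 1) h
    simp [Polynomial.coeff_one] at this
  apply mul_left_cancel₀ hX
  calc (1 - (X : ℤ[X])) * ∏ k ∈ Finset.range n, (1 - (X : ℤ[X]) ^ (k + 2))
      = ∏ k ∈ Finset.range (n + 1), (1 - (X : ℤ[X]) ^ (k + 1)) := by
        rw [Finset.prod_range_succ']; ring
    _ = (∏ k ∈ Finset.range n, (1 - (X : ℤ[X]) ^ (k + 1))) * (1 - X ^ (n + 1)) := by
        rw [Finset.prod_range_succ]
    _ = _ := by rw [geom_aux]; ring

lemma step_aux (n : ℕ) (f : ℕ → ℤ[X]) :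
    ∏ i ∈ Finset.Icc 1 (n + 1), ∏ j ∈ Finset.Icc (i + 1) (n + 1), f (j - i) =
      (∏ i ∈ Finset.Icc 1 n, ∏ j ∈ Finset.Icc (i + 1) n, f (j - i)) *
        ∏ k ∈ Finset.range n, f (k + 1) := by
  rw [Finset.prod_Icc_succ_top (by omega : 1 ≤ n + 1)]
  have hempty : Finset.Icc (n + 1 + 1) (n + 1) = ∅ := by
    rw [Finset.Icc_eq_empty]; omega
  rw [hempty, Finset.prod_empty, mul_one]
  have hi : ∀ i ∈ Finset.Icc 1 n,
      ∏ j ∈ Finset.Icc (i + 1) (n + 1), f (j - i) =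
        (∏ j ∈ Finset.Icc (i + 1) n, f (j - i)) * f (n + 1 - i) := by
    intro i hi
    rw [Finset.mem_Icc] at hi
    rw [Finset.prod_Icc_succ_top (by omega : i + 1 ≤ n + 1)]
  rw [Finset.prod_congr rfl hi, Finset.prod_mul_distrib]
  congr 1
  apply Finset.prod_nbij' (fun i => n - i) (fun k => n - k)
  · intro i hi; rw [Finset.mem_Icc] at hi; rw [Finset.mem_range]; omega
  · intro k hk; rw [Finset.mem_range] at hk; rw [Finset.mem_Icc]; omega
  · intro i hi; rw [Finset.mem_Icc] at hi; omega
  · intro k hk; rw [Finset.mem_range] at hk; omega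
  · intro i hi; rw [Finset.mem_Icc] at hi
    congr 1; omega

/-- The Kostant–Macdonald–Shapiro–Steinberg product identity for type `A_{n−1}`:
`∏_{1 ≤ i < j ≤ n} (1 − q^{(j−i)+1}) = (∏_{1 ≤ i < j ≤ n} (1 − q^{j−i})) · ∏_{i=1}^{n−1} (1 + q + ⋯ + qⁱ)`. -/
theorem stmt8 (n : ℕ) (hn : 1 ≤ n) :
    ∏ i ∈ Finset.Icc 1 n, ∏ j ∈ Finset.Icc (i + 1) n, (1 - (X : ℤ[X]) ^ ((j - i) + 1)) =
      (∏ i ∈ Finset.Icc 1 n, ∏ j ∈ Finset.Icc (i + 1) n, (1 - (X : ℤ[X]) ^ (j - i))) *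
        ∏ i ∈ Finset.Icc 1 (n - 1), ∑ j ∈ Finset.range (i + 1), (X : ℤ[X]) ^ j := by
  induction n, hn using Nat.le_induction with
  | base => simp
  | succ n hn ih =>
    obtain ⟨m, rfl⟩ : ∃ m, n = m + 1 := ⟨n - 1, by omega⟩
    simp only [Nat.add_sub_cancel] at ih ⊢
    have hA := step_aux (m + 1) (fun k => 1 - (X : ℤ[X]) ^ (k + 1))
    have hB := step_aux (m + 1) (fun k => 1 - (X : ℤ[X]) ^ k)
    have hG : ∏ i ∈ Finset.Icc 1 (m + 1), ∑ j ∈ Finset.range (i + 1), (X : ℤ[X]) ^ j =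
        (∏ i ∈ Finset.Icc 1 m, ∑ j ∈ Finset.range (i + 1), (X : ℤ[X]) ^ j) *
          ∑ j ∈ Finset.range (m + 1 + 1), (X : ℤ[X]) ^ j :=
      Finset.prod_Icc_succ_top (by omega) _
    rw [hA, hB, hG, ih, shift_aux]
    ring
end

section
/- For every integer n ≥ 1, the following identity holds in the polynomial ring ℤ[q]: (∑_{σ ∈ S_n} q^{inv(σ)}) · ∏_{1 ≤ i < j ≤ n} (1 − q^{j−i}) = ∏_{1 ≤ i < j ≤ n} (1 − q^{(j−i)+1}). (This is the type A_{n−1} case of the remarkable formula of Kostant, Macdonald, Shapiro and Steinberg expressing the Poincaré polynomial of the Weyl group as a product over the positive roots in terms of their heights, with the positive roots of A_{n−1} corresponding to pairs (i, j), 1 ≤ i < j ≤ n, of height j − i.) -/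
open Polynomial Finset Equiv

/-- Inversion count. -/
def invc {n : ℕ} (σ : Equiv.Perm (Fin n)) : ℕ :=
  (Finset.univ.filter fun p : Fin n × Fin n => p.1 < p.2 ∧ σ p.2 < σ p.1).card

/-- Insert: σ p = 0, σ (p.succAbove x) = (e x).succ. -/
def ins {n : ℕ} (p : Fin (n + 1)) (e : Equiv.Perm (Fin n)) : Equiv.Perm (Fin (n + 1)) :=
  (finSuccEquiv' p).trans ((Equiv.optionCongr e).trans (finSuccEquiv' 0).symm)

lemma ins_at {n : ℕ} (p : Fin (n + 1)) (e : Equiv.Perm (Fin n)) : ins p e p = 0 := by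
  simp [ins, finSuccEquiv'_at, finSuccEquiv'_symm_none]

lemma ins_succAbove {n : ℕ} (p : Fin (n + 1)) (e : Equiv.Perm (Fin n)) (x : Fin n) :
    ins p e (p.succAbove x) = (e x).succ := by
  simp [ins, finSuccEquiv'_succAbove, finSuccEquiv'_symm_some]

lemma ins_bijective {n : ℕ} :
    Function.Bijective (fun pe : Fin (n + 1) × Equiv.Perm (Fin n) => ins pe.1 pe.2) := by
  rw [Fintype.bijective_iff_injective_and_card]
  constructor
  · rintro ⟨p, e⟩ ⟨p', e'⟩ h
    simp only at h
    have hp : p = p' := by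
      have h0 : ins p' e' p = 0 := by rw [← h, ins_at]
      by_contra hne
      obtain ⟨x, hx⟩ := Fin.exists_succAbove_eq hne
      rw [← hx, ins_succAbove] at h0
      exact (Fin.succ_ne_zero _) h0
    subst hp
    have he : e = e' := by
      ext x
      have := congrArg (fun σ : Equiv.Perm (Fin (n+1)) => σ (p.succAbove x)) h
      simp only [ins_succAbove] at this
      exact congrArg Fin.val (Fin.succ_injective _ this)
    rw [he]
  · simp [Fintype.card_perm, Nat.factorial_succ]

lemma card_filter_val_lt {n : ℕ} (p : Fin (n + 1)) :
    (Finset.univ.filter fun x : Fin n => (x : ℕ) < (p : ℕ)).card = (p : ℕ) := by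
  have h1 : (Finset.univ.filter fun x : Fin n => (x : ℕ) < (p : ℕ)).card
      = ∑ x : Fin n, if (x : ℕ) < (p : ℕ) then 1 else 0 := by
    rw [Finset.card_filter]
  rw [h1, Fin.sum_univ_eq_sum_range (fun i => if i < (p : ℕ) then 1 else 0)]
  rw [← Finset.card_filter]
  have h2 : (Finset.range n).filter (fun i => i < (p : ℕ)) = Finset.range (p : ℕ) := by
    ext i
    simp only [Finset.mem_filter, Finset.mem_range]
    have := p.isLt
    omega
  rw [h2, Finset.card_range]

lemma invc_ins {n : ℕ} (p : Fin (n + 1)) (e : Equiv.Perm (Fin n)) :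
    invc (ins p e) = (p : ℕ) + invc e := by
  classical
  unfold invc
  rw [Finset.card_filter, Fintype.sum_prod_type]
  rw [Fin.sum_univ_succAbove _ p]
  have hdiag : ∀ j : Fin (n+1),
      (if p < j ∧ ins p e j < ins p e p then (1:ℕ) else 0) = 0 := by
    intro j
    rw [ins_at]
    simp [Fin.not_lt_zero]
  have houter : (∑ j : Fin (n+1), if p < j ∧ ins p e j < ins p e p then (1:ℕ) else 0) = 0 := by
    simp only [hdiag, Finset.sum_const_zero]
  rw [houter]
  have hrow : ∀ x : Fin n,
      (∑ j : Fin (n+1), if p.succAbove x < j ∧ ins p e j < ins p e (p.succAbove x)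
        then (1:ℕ) else 0)
      = (if (x : ℕ) < (p : ℕ) then 1 else 0)
        + ∑ y : Fin n, if x < y ∧ e y < e x then (1:ℕ) else 0 := by
    intro x
    rw [Fin.sum_univ_succAbove _ p]
    congr 1
    · rw [ins_at, ins_succAbove]
      have : p.succAbove x < p ↔ (x : ℕ) < (p : ℕ) := by
        rw [Fin.succAbove_lt_iff_castSucc_lt]
        exact Iff.rfl
      simp only [Fin.succ_pos, and_true]
      rw [if_congr this rfl rfl]
    · refine Finset.sum_congr rfl fun y _ => ?_
      rw [ins_succAbove, ins_succAbove]
      rw [if_congr (and_congr Fin.succAbove_lt_succAbove_iff Fin.succ_lt_succ_iff) rfl rfl]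
  rw [Finset.sum_congr rfl fun x _ => hrow x, Finset.sum_add_distrib]
  rw [← Finset.card_filter, card_filter_val_lt]
  conv_rhs => rw [Finset.card_filter, Fintype.sum_prod_type]
  rw [zero_add]

lemma sum_inv_eq {n : ℕ} :
    (∑ σ : Equiv.Perm (Fin n), (X : ℤ[X]) ^ invc σ)
      = ∏ k ∈ Finset.range n, ∑ i ∈ Finset.range (k + 1), (X : ℤ[X]) ^ i := by
  induction n with
  | zero => simp [invc]
  | succ n ih =>
    rw [← Fintype.sum_bijective _ (ins_bijective (n := n))
      (fun pe => (X : ℤ[X]) ^ invc (ins pe.1 pe.2)) (fun σ => (X : ℤ[X]) ^ invc σ)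
      (fun pe => rfl)]
    rw [Fintype.sum_prod_type]
    have : ∀ (x : Fin (n+1)) (y : Equiv.Perm (Fin n)),
        (X : ℤ[X]) ^ invc (ins x y) = (X : ℤ[X]) ^ (x : ℕ) * (X : ℤ[X]) ^ invc y := by
      intro x y; rw [invc_ins, pow_add]
    rw [Finset.sum_congr rfl fun x _ => Finset.sum_congr rfl fun y _ => this x y]
    simp only [← Finset.mul_sum]
    rw [← Finset.sum_mul]
    rw [ih, Fin.sum_univ_eq_sum_range (fun i => (X : ℤ[X]) ^ i), Finset.prod_range_succ]
    ring

lemma factor_eq (k : ℕ) :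
    (∑ i ∈ Finset.range (k + 1), (X : ℤ[X]) ^ i) * ∏ j ∈ Finset.Icc 1 k, (1 - (X : ℤ[X]) ^ j)
      = ∏ j ∈ Finset.Icc 2 (k + 1), (1 - (X : ℤ[X]) ^ j) := by
  induction k with
  | zero => simp
  | succ m _ =>
    have h1 : Finset.Icc 1 (m + 1) = insert 1 (Finset.Icc 2 (m + 1)) := by
      ext i; simp only [Finset.mem_Icc, Finset.mem_insert]; omega
    have h2 : Finset.Icc 2 (m + 2) = insert (m + 2) (Finset.Icc 2 (m + 1)) := by
      ext i; simp only [Finset.mem_Icc, Finset.mem_insert]; omega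
    rw [h1, h2, Finset.prod_insert (by simp), Finset.prod_insert (by simp)]
    have hg := geom_sum_mul (X : ℤ[X]) (m + 2)
    set P := ∏ j ∈ Finset.Icc 2 (m + 1), (1 - (X : ℤ[X]) ^ j)
    rw [pow_one]
    linear_combination (-P) * hg

lemma inner_reindex {n : ℕ} (i : ℕ) (hi : i ∈ Finset.Icc 1 n) (f : ℕ → ℤ[X]) :
    (∏ j ∈ Finset.Icc (i + 1) n, f (j - i)) = ∏ k ∈ Finset.Icc 1 (n - i), f k := by
  simp only [Finset.mem_Icc] at hi
  refine Finset.prod_nbij' (fun j => j - i) (fun k => k + i) ?_ ?_ ?_ ?_ ?_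
  · intro j hj; simp only [Finset.mem_Icc] at *; omega
  · intro k hk; simp only [Finset.mem_Icc] at *; omega
  · intro j hj; simp only [Finset.mem_Icc] at hj; show j - i + i = j; omega
  · intro k hk; simp only [Finset.mem_Icc] at hk; show k + i - i = k; omega
  · intro j hj; rfl

lemma outer_reindex {n : ℕ} (g : ℕ → ℤ[X]) :
    (∏ i ∈ Finset.Icc 1 n, g (n - i)) = ∏ m ∈ Finset.range n, g m := by
  refine Finset.prod_nbij' (fun i => n - i) (fun m => n - m) ?_ ?_ ?_ ?_ ?_
  · intro i hi; simp only [Finset.mem_Icc, Finset.mem_range] at *; omega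
  · intro m hm; simp only [Finset.mem_Icc, Finset.mem_range] at *; omega
  · intro i hi; simp only [Finset.mem_Icc] at hi; show n - (n - i) = i; omega
  · intro m hm; simp only [Finset.mem_range] at hm; show n - (n - m) = m; omega
  · intro i hi; rfl

/-- The type `A_{n−1}` case of the remarkable formula of Kostant, Macdonald,
Shapiro and Steinberg:
`(∑_{σ ∈ Sₙ} q^{inv σ}) · ∏_{1 ≤ i < j ≤ n} (1 − q^{j−i}) = ∏_{1 ≤ i < j ≤ n} (1 − q^{(j−i)+1})`. -/
theorem stmt10 (n : ℕ) (hn : 1 ≤ n)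
    (inv : Equiv.Perm (Fin n) → ℕ)
    (hinv : ∀ σ, inv σ =
      (Finset.univ.filter fun p : Fin n × Fin n => p.1 < p.2 ∧ σ p.2 < σ p.1).card) :
    (∑ σ : Equiv.Perm (Fin n), (X : ℤ[X]) ^ inv σ) *
        ∏ i ∈ Finset.Icc 1 n, ∏ j ∈ Finset.Icc (i + 1) n, (1 - (X : ℤ[X]) ^ (j - i)) =
      ∏ i ∈ Finset.Icc 1 n, ∏ j ∈ Finset.Icc (i + 1) n, (1 - (X : ℤ[X]) ^ ((j - i) + 1)) := by
  have hsum : (∑ σ : Equiv.Perm (Fin n), (X : ℤ[X]) ^ inv σ)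
      = ∑ σ : Equiv.Perm (Fin n), (X : ℤ[X]) ^ invc σ :=
    Finset.sum_congr rfl fun σ _ => by rw [hinv σ]; rfl
  rw [hsum, sum_inv_eq]
  have hL : (∏ i ∈ Finset.Icc 1 n, ∏ j ∈ Finset.Icc (i + 1) n, (1 - (X : ℤ[X]) ^ (j - i)))
      = ∏ m ∈ Finset.range n, ∏ k ∈ Finset.Icc 1 m, (1 - (X : ℤ[X]) ^ k) := by
    rw [Finset.prod_congr rfl fun i hi =>
      inner_reindex i hi (fun t => 1 - (X : ℤ[X]) ^ t)]
    exact outer_reindex (fun m => ∏ k ∈ Finset.Icc 1 m, (1 - (X : ℤ[X]) ^ k))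
  have hR : (∏ i ∈ Finset.Icc 1 n, ∏ j ∈ Finset.Icc (i + 1) n, (1 - (X : ℤ[X]) ^ ((j - i) + 1)))
      = ∏ m ∈ Finset.range n, ∏ k ∈ Finset.Icc 1 m, (1 - (X : ℤ[X]) ^ (k + 1)) := by
    rw [Finset.prod_congr rfl fun i hi =>
      inner_reindex i hi (fun t => 1 - (X : ℤ[X]) ^ (t + 1))]
    exact outer_reindex (fun m => ∏ k ∈ Finset.Icc 1 m, (1 - (X : ℤ[X]) ^ (k + 1)))
  rw [hL, hR, ← Finset.prod_mul_distrib]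
  refine Finset.prod_congr rfl fun k _ => ?_
  rw [factor_eq k]
  refine Finset.prod_nbij' (fun j => j - 1) (fun j => j + 1) ?_ ?_ ?_ ?_ ?_
  · intro j hj; simp only [Finset.mem_Icc] at *; omega
  · intro j hj; simp only [Finset.mem_Icc] at *; omega
  · intro j hj; simp only [Finset.mem_Icc] at hj; show j - 1 + 1 = j; omega
  · intro j hj; simp only [Finset.mem_Icc] at hj; show j + 1 - 1 = j; omega
  · intro j hj; simp only [Finset.mem_Icc] at hj
    have hj1 : j - 1 + 1 = j := by omega
    simp only [hj1]
end
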